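/- arXiv:1905.04653 — 4 statements merged into one kernel-verified Lean document; each statement's English description precedes it below -/
import Mathlib

section
/- Let s ≥ 2 and let k1, ..., ks be positive integers with S = k1 + ... + ks and m = max{k1, ..., ks}. Let H be obtained from the complete s-partite graph K_{k1,...,ks} by deleting edges so that every vertex loses fewer than t neighbors. Then H has a matching of size at least min{⌊S/2⌋, S - m} - t. -/
open SimpleGraph

variable {V : Type*}

/-- `M` is a matching: a finite set of ordered pairs of adjacent vertices
with pairwise disjoint endpoints. -/
def IsMatchingSet (G : SimpleGraph V) (M : Finset (V × V)) : Prop :=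
  (∀ e ∈ M, G.Adj e.1 e.2) ∧
  ∀ e ∈ M, ∀ f ∈ M, e ≠ f →
    e.1 ≠ f.1 ∧ e.1 ≠ f.2 ∧ e.2 ≠ f.1 ∧ e.2 ≠ f.2

/-- `M` is a connected matching in `G`: a matching all of whose edges lie in
one connected component of `G`. -/
def ConnMatching (G : SimpleGraph V) (M : Finset (V × V)) : Prop :=
  IsMatchingSet G M ∧ ∀ e ∈ M, ∀ f ∈ M, G.Reachable e.1 f.1

/-- Vertex `v` is covered by the matching `M`. -/
def Covers (M : Finset (V × V)) (v : V) : Prop :=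
  ∃ e ∈ M, v = e.1 ∨ v = e.2

/-- The color-`i` subgraph of `G` under the edge-coloring `c`. -/
def colorSub (G : SimpleGraph V) {k : ℕ} (c : Sym2 V → Fin k) (i : Fin k) :
    SimpleGraph V :=
  SimpleGraph.fromRel (fun u v => G.Adj u v ∧ c s(u, v) = i)

lemma not_covers {M : Finset (V × V)} {v : V} (h : ¬ Covers M v) :
    ∀ e ∈ M, v ≠ e.1 ∧ v ≠ e.2 := by
  intro e he
  constructor <;> intro hv <;> exact h ⟨e, he, by tauto⟩

lemma aug_insert [DecidableEq V] {G : SimpleGraph V} {M : Finset (V × V)}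
    (hM : IsMatchingSet G M) {u w : V} (hu : ¬Covers M u) (hw : ¬Covers M w)
    (huw : G.Adj u w) :
    IsMatchingSet G (insert (u, w) M) ∧ (insert (u, w) M).card = M.card + 1 := by
  have hu' := not_covers hu
  have hw' := not_covers hw
  have hmem : (u, w) ∉ M := fun h => (hu' _ h).1 rfl
  refine ⟨⟨?_, ?_⟩, Finset.card_insert_of_notMem hmem⟩
  · intro e he
    rcases Finset.mem_insert.1 he with rfl | he
    · exact huw
    · exact hM.1 e he
  · intro e he f hf hef
    rcases Finset.mem_insert.1 he with rfl | he <;>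
      rcases Finset.mem_insert.1 hf with rfl | hf
    · exact absurd rfl hef
    · exact ⟨(hu' f hf).1, (hu' f hf).2, (hw' f hf).1, (hw' f hf).2⟩
    · exact ⟨((hu' e he).1).symm, ((hw' e he).1).symm, ((hu' e he).2).symm, ((hw' e he).2).symm⟩
    · exact hM.2 e he f hf hef

lemma aug_swap [DecidableEq V] {G : SimpleGraph V} {M : Finset (V × V)}
    (hM : IsMatchingSet G M) {u w : V} (hu : ¬Covers M u) (hw : ¬Covers M w)
    (huw : u ≠ w) {e : V × V} (he : e ∈ M) (h1 : G.Adj u e.1) (h2 : G.Adj w e.2) :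
    ∃ M' : Finset (V × V), IsMatchingSet G M' ∧ M'.card = M.card + 1 := by
  have hu' := not_covers hu
  have hw' := not_covers hw
  have hux : u ≠ e.1 := h1.ne
  have huy : u ≠ e.2 := (hu' e he).2
  have hwx : w ≠ e.1 := (hw' e he).1
  have hwy : w ≠ e.2 := h2.ne
  have hxy : e.1 ≠ e.2 := (hM.1 e he).ne
  refine ⟨insert (u, e.1) (insert (w, e.2) (M.erase e)), ⟨?_, ?_⟩, ?_⟩
  · intro f hf
    rcases Finset.mem_insert.1 hf with rfl | hf
    · exact h1
    rcases Finset.mem_insert.1 hf with rfl | hf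
    · exact h2
    · exact hM.1 f (Finset.mem_of_mem_erase hf)
  · intro f hf g hg hfg
    have key : ∀ a, a ∈ M.erase e → a ≠ e ∧ a ∈ M := fun a ha =>
      ⟨Finset.ne_of_mem_erase ha, Finset.mem_of_mem_erase ha⟩
    rcases Finset.mem_insert.1 hf with rfl | hf
    · rcases Finset.mem_insert.1 hg with rfl | hg
      · exact absurd rfl hfg
      rcases Finset.mem_insert.1 hg with rfl | hg
      · exact ⟨huw, huy, hwx.symm, hxy⟩
      · obtain ⟨hge, hgM⟩ := key _ hg
        obtain ⟨d1, d2, d3, d4⟩ := hM.2 e he g hgM (Ne.symm hge)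
        exact ⟨(hu' g hgM).1, (hu' g hgM).2, d1, d2⟩
    rcases Finset.mem_insert.1 hf with rfl | hf
    · rcases Finset.mem_insert.1 hg with rfl | hg
      · exact ⟨huw.symm, hwx, huy.symm, hxy.symm⟩
      rcases Finset.mem_insert.1 hg with rfl | hg
      · exact absurd rfl hfg
      · obtain ⟨hge, hgM⟩ := key _ hg
        obtain ⟨d1, d2, d3, d4⟩ := hM.2 e he g hgM (Ne.symm hge)
        exact ⟨(hw' g hgM).1, (hw' g hgM).2, d3, d4⟩
    · obtain ⟨hfe, hfM⟩ := key _ hf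
      obtain ⟨d1, d2, d3, d4⟩ := hM.2 e he f hfM (Ne.symm hfe)
      rcases Finset.mem_insert.1 hg with rfl | hg
      · exact ⟨((hu' f hfM).1).symm, d1.symm, ((hu' f hfM).2).symm, d2.symm⟩
      rcases Finset.mem_insert.1 hg with rfl | hg
      · exact ⟨((hw' f hfM).1).symm, d3.symm, ((hw' f hfM).2).symm, d4.symm⟩
      · exact hM.2 f hfM g (Finset.mem_of_mem_erase hg)
          (fun h => hfg (by rw [h]))
  · have hq1 : 1 ≤ M.card := Finset.card_pos.2 ⟨e, he⟩
    have m1 : (w, e.2) ∉ M.erase e := fun h =>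
      (hw' _ (Finset.mem_of_mem_erase h)).1 rfl
    have m2 : (u, e.1) ∉ insert (w, e.2) (M.erase e) := by
      intro h
      rcases Finset.mem_insert.1 h with h | h
      · exact huw (congrArg Prod.fst h)
      · exact (hu' _ (Finset.mem_of_mem_erase h)).1 rfl
    rw [Finset.card_insert_of_notMem m2, Finset.card_insert_of_notMem m1,
      Finset.card_erase_of_mem he]
    omega

lemma natCard_setOf {V : Type*} [Fintype V] (pred : V → Prop) [DecidablePred pred] :
    Nat.card {v : V | pred v} = (Finset.univ.filter pred).card := by
  rw [Nat.card_coe_set_eq, Set.ncard_eq_toFinset_card', Set.toFinset_setOf]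

/-- If `H` is obtained from the complete multipartite graph with parts given
by `p` (total size `S = |V|`, largest part size `m`) by deleting edges so that
every vertex loses fewer than `t` neighbors, then `H` has a matching of size
at least `min{⌊S/2⌋, S - m} - t`. -/
theorem stmt11 {V : Type*} [Fintype V] (s : ℕ) (hs : 2 ≤ s)
    (p : V → Fin s) (hp : Function.Surjective p)
    (t : ℝ) (ht : 0 ≤ t)
    (H : SimpleGraph V)
    (hsub : ∀ u v, H.Adj u v → p u ≠ p v)
    (hdel : ∀ v : V, (Nat.card {u : V | p u ≠ p v ∧ ¬ H.Adj v u} : ℝ) < t)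
    (m : ℕ)
    (hm : m = Finset.univ.sup (fun i : Fin s => Nat.card {v : V | p v = i})) :
    ∃ M : Finset (V × V), IsMatchingSet H M ∧
      ((min (Fintype.card V / 2) (Fintype.card V - m) : ℕ) : ℝ) - t ≤ M.card := by
  classical
  set S := Fintype.card V with hSdef
  set N := min (S / 2) (S - m) with hNdef
  set D : V → Finset V := fun v => Finset.univ.filter (fun z => p z ≠ p v ∧ ¬ H.Adj v z) with hDdef
  have hDt : ∀ v, ((D v).card : ℝ) < t := by
    intro v
    have h := hdel v
    rwa [natCard_setOf] at h
  -- maximum matching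
  obtain ⟨M, hMmem, hMmax⟩ := Finset.exists_max_image
    ((Finset.univ : Finset (Finset (V × V))).filter (fun M => IsMatchingSet H M))
    Finset.card ⟨∅, by simp [IsMatchingSet]⟩
  have hM : IsMatchingSet H M := (Finset.mem_filter.1 hMmem).2
  have hmax : ∀ M' : Finset (V × V), IsMatchingSet H M' → M'.card ≤ M.card := fun M' h =>
    hMmax M' (Finset.mem_filter.2 ⟨Finset.mem_univ _, h⟩)
  refine ⟨M, hM, ?_⟩
  by_contra hq
  push_neg at hq
  set q := M.card with hqdef
  -- hq : (N:ℝ) - t > q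
  have hdisj : ∀ e ∈ M, ∀ f ∈ M, e ≠ f →
      Disjoint ({e.1, e.2} : Finset V) {f.1, f.2} := by
    intro e he f hf hef
    obtain ⟨d1, d2, d3, d4⟩ := hM.2 e he f hf hef
    simp only [Finset.disjoint_insert_left, Finset.disjoint_singleton_left,
      Finset.mem_insert, Finset.mem_singleton]
    push_neg
    exact ⟨⟨d1, d2⟩, d3, d4⟩
  set C := M.biUnion (fun e => ({e.1, e.2} : Finset V)) with hCdef
  have hCcard : C.card = 2 * q := by
    rw [hCdef, Finset.card_biUnion hdisj]
    rw [Finset.sum_congr rfl (fun e he => Finset.card_pair (hM.1 e he).ne)]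
    simp [mul_comm]
    exact hqdef.symm
  have hCov : ∀ v, Covers M v ↔ v ∈ C := by
    intro v
    simp [Covers, hCdef, Finset.mem_biUnion]
  set U := Finset.univ \ C with hUdef
  have hUC : U.card + C.card = S := Finset.card_sdiff_add_card_eq_card (Finset.subset_univ C)
  have hUcov : ∀ v ∈ U, ¬ Covers M v := by
    intro v hv
    rw [hCov]
    exact (Finset.mem_sdiff.1 hv).2
  -- basic numeric facts
  have hmS : m ≤ S := by
    rw [hm]
    apply Finset.sup_le
    intro i _
    rw [natCard_setOf]
    exact le_trans (Finset.card_filter_le _ _) (le_of_eq Finset.card_univ)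
  have hNS2 : N ≤ S / 2 := min_le_left _ _
  have hNSm : N ≤ S - m := min_le_right _ _
  have h2N : 2 * N ≤ S := by omega
  have hqN : q < N := by
    have : (q : ℝ) < (N : ℝ) := lt_of_lt_of_le hq (by linarith)
    exact_mod_cast this
  have hU2 : 2 ≤ U.card := by omega
  have hUcardR : (U.card : ℝ) + 2 * q = S := by
    have h : U.card + 2 * q = S := by omega
    exact_mod_cast h
  have h2NR : 2 * (N : ℝ) ≤ (S : ℝ) := by exact_mod_cast h2N
  -- no edge between uncovered vertices
  have hnoedge : ∀ u' w', ¬Covers M u' → ¬Covers M w' → ¬ H.Adj u' w' := by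
    intro u' w' hcu hcw hadj
    obtain ⟨hm', hc'⟩ := aug_insert hM hcu hcw hadj
    have := hmax _ hm'
    omega
  have hnoaug : ∀ u' w', ¬Covers M u' → ¬Covers M w' → u' ≠ w' →
      ∀ e ∈ M, ¬ (H.Adj u' e.1 ∧ H.Adj w' e.2) := by
    rintro u' w' hcu hcw hne e he ⟨h1, h2⟩
    obtain ⟨M', hm', hc'⟩ := aug_swap hM hcu hcw hne he h1 h2
    have := hmax _ hm'
    omega
  -- step 1: all uncovered vertices in one part
  obtain ⟨u, hu⟩ : U.Nonempty := Finset.card_pos.1 (by omega)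
  have hsame : ∀ v ∈ U, p v = p u := by
    by_contra hcon
    push_neg at hcon
    obtain ⟨w, hw, hpw⟩ := hcon
    have hUsub : U ⊆ D u ∪ D w := by
      intro v hv
      by_cases hpv : p v = p u
      · refine Finset.mem_union_right _ ?_
        simp only [hDdef, Finset.mem_filter]
        refine ⟨Finset.mem_univ _, ?_, hnoedge w v (hUcov w hw) (hUcov v hv)⟩
        rw [hpv]
        exact Ne.symm hpw
      · refine Finset.mem_union_left _ ?_
        simp only [hDdef, Finset.mem_filter]
        exact ⟨Finset.mem_univ _, hpv, hnoedge u v (hUcov u hu) (hUcov v hv)⟩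
    have h1 : (U.card : ℝ) ≤ ((D u).card : ℝ) + ((D w).card : ℝ) := by
      have h2 := le_trans (Finset.card_le_card hUsub) (Finset.card_union_le (D u) (D w))
      exact_mod_cast h2
    have := hDt u
    have := hDt w
    linarith
  set i := p u with hidef
  set P := Finset.univ.filter (fun v => p v = i) with hPdef
  have hUP : U ⊆ P := fun v hv => Finset.mem_filter.2 ⟨Finset.mem_univ _, hsame v hv⟩
  have hPm : P.card ≤ m := by
    rw [hm]
    have h : Nat.card {v : V | p v = i} ≤ Finset.univ.sup (fun j : Fin s => Nat.card {v : V | p v = j}) :=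
      Finset.le_sup (f := fun j : Fin s => Nat.card {v : V | p v = j}) (Finset.mem_univ i)
    rwa [natCard_setOf] at h
  -- second uncovered vertex
  obtain ⟨a, ha, b, hb, hab⟩ := Finset.one_lt_card.1 (by omega : 1 < U.card)
  obtain ⟨w, hwU, hwu⟩ : ∃ w ∈ U, w ≠ u := by
    by_cases h : a = u
    · exact ⟨b, hb, fun hbu => hab (h.trans hbu.symm ▸ rfl)⟩
    · exact ⟨a, ha, h⟩
  have hpwi : p w = i := hsame w hwU
  -- step 3 : 2 * q2 ≤ |D u| + |D w|
  set M2 := M.filter (fun e => ¬ p e.1 = i ∧ ¬ p e.2 = i) with hM2def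
  set q2 := M2.card with hq2def
  have hsumD : ∀ X : Finset V, (∑ e ∈ M2, (X ∩ {e.1, e.2}).card) ≤ X.card := by
    intro X
    have hd : ∀ e ∈ M2, ∀ f ∈ M2, e ≠ f →
        Disjoint (X ∩ ({e.1, e.2} : Finset V)) (X ∩ {f.1, f.2}) := by
      intro e he f hf hef
      exact (hdisj e (Finset.mem_of_mem_filter _ he) f (Finset.mem_of_mem_filter _ hf)
        hef).mono Finset.inter_subset_right Finset.inter_subset_right
    rw [← Finset.card_biUnion hd]
    exact Finset.card_le_card (Finset.biUnion_subset.2 fun e _ => Finset.inter_subset_left)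
  have hkey : 2 * q2 ≤ (D u).card + (D w).card := by
    have hper : ∀ e ∈ M2, 2 ≤ ((D u) ∩ ({e.1, e.2} : Finset V)).card +
        ((D w) ∩ ({e.1, e.2} : Finset V)).card := by
      intro e he
      rw [hM2def, Finset.mem_filter] at he
      obtain ⟨heM, hp1, hp2⟩ := he
      have hxy : e.1 ≠ e.2 := (hM.1 e heM).ne
      have hne1u : p e.1 ≠ p u := by rw [← hidef]; exact hp1
      have hne2u : p e.2 ≠ p u := by rw [← hidef]; exact hp2
      have hne1w : p e.1 ≠ p w := by rw [hpwi]; exact hp1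
      have hne2w : p e.2 ≠ p w := by rw [hpwi]; exact hp2
      have hmemDu : ∀ z, p z ≠ p u → (z ∈ D u ↔ ¬ H.Adj u z) := by
        intro z hz
        simp only [hDdef, Finset.mem_filter, Finset.mem_univ, true_and]
        tauto
      have hmemDw : ∀ z, p z ≠ p w → (z ∈ D w ↔ ¬ H.Adj w z) := by
        intro z hz
        simp only [hDdef, Finset.mem_filter, Finset.mem_univ, true_and]
        tauto
      have hc1 : e.1 ∈ D u ∨ e.2 ∈ D w := by
        by_contra hcc
        push_neg at hcc
        have a1 : H.Adj u e.1 := not_not.1 (fun h => hcc.1 ((hmemDu e.1 hne1u).2 h))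
        have a2 : H.Adj w e.2 := not_not.1 (fun h => hcc.2 ((hmemDw e.2 hne2w).2 h))
        exact hnoaug u w (hUcov u hu) (hUcov w hwU) (Ne.symm hwu) e heM ⟨a1, a2⟩
      have hc2 : e.2 ∈ D u ∨ e.1 ∈ D w := by
        by_contra hcc
        push_neg at hcc
        have a1 : H.Adj w e.1 := not_not.1 (fun h => hcc.2 ((hmemDw e.1 hne1w).2 h))
        have a2 : H.Adj u e.2 := not_not.1 (fun h => hcc.1 ((hmemDu e.2 hne2u).2 h))
        exact hnoaug w u (hUcov w hwU) (hUcov u hu) hwu e heM ⟨a1, a2⟩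
      rcases hc1 with h1 | h1 <;> rcases hc2 with h2 | h2
      · have hsub2 : ({e.1, e.2} : Finset V) ⊆ (D u) ∩ {e.1, e.2} := by
          intro z hz
          refine Finset.mem_inter.2 ⟨?_, hz⟩
          rcases Finset.mem_insert.1 hz with rfl | hz
          · exact h1
          · rw [Finset.mem_singleton.1 hz]; exact h2
        have := Finset.card_le_card hsub2
        rw [Finset.card_pair hxy] at this
        omega
      · have c1 : 1 ≤ ((D u) ∩ ({e.1, e.2} : Finset V)).card :=
          Finset.card_pos.2 ⟨e.1, Finset.mem_inter.2 ⟨h1, by simp⟩⟩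
        have c2 : 1 ≤ ((D w) ∩ ({e.1, e.2} : Finset V)).card :=
          Finset.card_pos.2 ⟨e.1, Finset.mem_inter.2 ⟨h2, by simp⟩⟩
        omega
      · have c1 : 1 ≤ ((D u) ∩ ({e.1, e.2} : Finset V)).card :=
          Finset.card_pos.2 ⟨e.2, Finset.mem_inter.2 ⟨h2, by simp⟩⟩
        have c2 : 1 ≤ ((D w) ∩ ({e.1, e.2} : Finset V)).card :=
          Finset.card_pos.2 ⟨e.2, Finset.mem_inter.2 ⟨h1, by simp⟩⟩
        omega
      · have hsub2 : ({e.1, e.2} : Finset V) ⊆ (D w) ∩ {e.1, e.2} := by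
          intro z hz
          refine Finset.mem_inter.2 ⟨?_, hz⟩
          rcases Finset.mem_insert.1 hz with rfl | hz
          · exact h2
          · rw [Finset.mem_singleton.1 hz]; exact h1
        have := Finset.card_le_card hsub2
        rw [Finset.card_pair hxy] at this
        omega
    calc 2 * q2 = ∑ _e ∈ M2, 2 := by rw [Finset.sum_const, smul_eq_mul, mul_comm]
      _ ≤ ∑ e ∈ M2, (((D u) ∩ ({e.1, e.2} : Finset V)).card +
          ((D w) ∩ ({e.1, e.2} : Finset V)).card) := Finset.sum_le_sum hper
      _ = (∑ e ∈ M2, ((D u) ∩ ({e.1, e.2} : Finset V)).card) +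
          ∑ e ∈ M2, ((D w) ∩ ({e.1, e.2} : Finset V)).card := Finset.sum_add_distrib
      _ ≤ (D u).card + (D w).card := add_le_add (hsumD _) (hsumD _)
  have hq2t : (q2 : ℝ) < t := by
    have h2 : (2 * q2 : ℝ) ≤ ((D u).card : ℝ) + ((D w).card : ℝ) := by exact_mod_cast hkey
    have := hDt u
    have := hDt w
    linarith
  -- step 4 : count vertices outside P
  have hout : Finset.univ \ P = M.biUnion (fun e => ({e.1, e.2} : Finset V) \ P) := by
    apply Finset.Subset.antisymm
    · intro v hv
      rw [Finset.mem_sdiff] at hv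
      have hvC : v ∈ C := by
        by_contra hvc
        exact hv.2 (hUP (Finset.mem_sdiff.2 ⟨Finset.mem_univ _, hvc⟩))
      rw [hCdef, Finset.mem_biUnion] at hvC
      obtain ⟨e, he, hve⟩ := hvC
      exact Finset.mem_biUnion.2 ⟨e, he, Finset.mem_sdiff.2 ⟨hve, hv.2⟩⟩
    · intro v hv
      rw [Finset.mem_biUnion] at hv
      obtain ⟨e, he, hve⟩ := hv
      exact Finset.mem_sdiff.2 ⟨Finset.mem_univ _, (Finset.mem_sdiff.1 hve).2⟩
  have houtcard : (Finset.univ \ P).card = ∑ e ∈ M, (({e.1, e.2} : Finset V) \ P).card := by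
    rw [hout]
    apply Finset.card_biUnion
    intro e he f hf hef
    exact (hdisj e he f hf hef).mono Finset.sdiff_subset Finset.sdiff_subset
  have hterm : ∀ e ∈ M, (({e.1, e.2} : Finset V) \ P).card =
      if ¬ p e.1 = i ∧ ¬ p e.2 = i then 2 else 1 := by
    intro e he
    have hxy : e.1 ≠ e.2 := (hM.1 e he).ne
    have hpp : p e.1 ≠ p e.2 := hsub _ _ (hM.1 e he)
    have hmem : ∀ z, z ∈ ({e.1, e.2} : Finset V) \ P ↔ (z = e.1 ∨ z = e.2) ∧ ¬ p z = i := by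
      intro z
      simp [hPdef, Finset.mem_sdiff]
    by_cases h1 : p e.1 = i <;> by_cases h2 : p e.2 = i
    · exact absurd (h1.trans h2.symm) hpp
    · rw [if_neg (by tauto)]
      have heq : ({e.1, e.2} : Finset V) \ P = {e.2} := by
        ext z
        rw [hmem, Finset.mem_singleton]
        constructor
        · rintro ⟨(rfl | rfl), hz⟩
          · exact absurd h1 hz
          · rfl
        · rintro rfl
          exact ⟨Or.inr rfl, h2⟩
      rw [heq, Finset.card_singleton]
    · rw [if_neg (by tauto)]
      have heq : ({e.1, e.2} : Finset V) \ P = {e.1} := by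
        ext z
        rw [hmem, Finset.mem_singleton]
        constructor
        · rintro ⟨(rfl | rfl), hz⟩
          · rfl
          · exact absurd h2 hz
        · rintro rfl
          exact ⟨Or.inl rfl, h1⟩
      rw [heq, Finset.card_singleton]
    · rw [if_pos ⟨h1, h2⟩]
      have heq : ({e.1, e.2} : Finset V) \ P = {e.1, e.2} := by
        ext z
        rw [hmem]
        simp only [Finset.mem_insert, Finset.mem_singleton]
        constructor
        · exact fun h => h.1
        · rintro (rfl | rfl)
          · exact ⟨Or.inl rfl, h1⟩
          · exact ⟨Or.inr rfl, h2⟩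
      rw [heq, Finset.card_pair hxy]
  have hcount : (Finset.univ \ P).card = q + q2 := by
    rw [houtcard, Finset.sum_congr rfl hterm]
    have hsplit1 : ∀ e ∈ M, (if ¬ p e.1 = i ∧ ¬ p e.2 = i then (2:ℕ) else 1) =
        (if ¬ p e.1 = i ∧ ¬ p e.2 = i then (1:ℕ) else 0) + 1 := by
      intro e _
      by_cases h : ¬ p e.1 = i ∧ ¬ p e.2 = i <;> simp [h]
    rw [Finset.sum_congr rfl hsplit1, Finset.sum_add_distrib,
      ← Finset.card_filter, Finset.sum_const, smul_eq_mul, mul_one, ← hM2def]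
    omega
  have hPcount : (Finset.univ \ P).card + P.card = S :=
    Finset.card_sdiff_add_card_eq_card (Finset.subset_univ P)
  have hNR : (N : ℝ) ≤ (S : ℝ) - m := by
    have h1 : (N : ℝ) ≤ ((S - m : ℕ) : ℝ) := Nat.cast_le.2 hNSm
    rw [Nat.cast_sub hmS] at h1
    exact h1
  have hqreal : (q : ℝ) + q2 + P.card = S := by
    have : q + q2 + P.card = S := by omega
    exact_mod_cast this
  have hPmR : (P.card : ℝ) ≤ m := Nat.cast_le.2 hPm
  linarith
end

section
/- Let B be a bipartite graph with parts P and Q, where every vertex of P ∪ Q is nonadjacent to fewer than t vertices of the other part. Then every vertex cover of B contains P, or contains Q, or contains all but fewer than t vertices of P and all but fewer than t vertices of Q; consequently B has a matching of size at least min{|P|, |Q|, |P| + |Q| - 2t}. -/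
/-- If in a bipartite graph with parts `P = α`, `Q = β` (adjacency `r`) every
vertex is nonadjacent to fewer than `t` vertices of the other part, then every
vertex cover contains `P`, or contains `Q`, or all but fewer than `t` vertices
of each of `P` and `Q`; consequently there is a matching of size at least
`min{|P|, |Q|, |P| + |Q| - 2t}`. -/
theorem stmt15 {α β : Type*} [Fintype α] [Fintype β] (t : ℕ)
    (r : α → β → Prop)
    (ha : ∀ a : α, Nat.card {b : β | ¬ r a b} < t)
    (hb : ∀ b : β, Nat.card {a : α | ¬ r a b} < t) :
    (∀ (Cp : Set α) (Cq : Set β), (∀ a b, r a b → a ∈ Cp ∨ b ∈ Cq) →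
      (∀ a, a ∈ Cp) ∨ (∀ b, b ∈ Cq) ∨
      (Nat.card {a : α | a ∉ Cp} < t ∧ Nat.card {b : β | b ∉ Cq} < t)) ∧
    (∃ M : Finset (α × β), (∀ e ∈ M, r e.1 e.2) ∧
      (∀ e ∈ M, ∀ f ∈ M, e ≠ f → e.1 ≠ f.1 ∧ e.2 ≠ f.2) ∧
      min (Fintype.card α)
        (min (Fintype.card β) (Fintype.card α + Fintype.card β - 2 * t)) ≤
        M.card) := by
  classical
  have hacard : ∀ a : α, (Finset.univ.filter fun b => ¬ r a b).card < t := by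
    intro a
    have := ha a
    rwa [Nat.card_coe_set_eq, Set.ncard_eq_toFinset_card', Set.toFinset_setOf] at this
  have hbcard : ∀ b : β, (Finset.univ.filter fun a => ¬ r a b).card < t := by
    intro b
    have := hb b
    rwa [Nat.card_coe_set_eq, Set.ncard_eq_toFinset_card', Set.toFinset_setOf] at this
  constructor
  · intro Cp Cq hcov
    by_cases hP : ∀ a, a ∈ Cp
    · exact Or.inl hP
    by_cases hQ : ∀ b, b ∈ Cq
    · exact Or.inr (Or.inl hQ)
    push_neg at hP hQ
    obtain ⟨a0, ha0⟩ := hP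
    obtain ⟨b0, hb0⟩ := hQ
    refine Or.inr (Or.inr ⟨?_, ?_⟩)
    · have hsub : {a : α | a ∉ Cp} ⊆ {a : α | ¬ r a b0} := by
        intro a haCp hr
        rcases hcov a b0 hr with h | h
        · exact haCp h
        · exact hb0 h
      calc Nat.card {a : α | a ∉ Cp} ≤ Nat.card {a : α | ¬ r a b0} := by
            rw [Nat.card_coe_set_eq, Nat.card_coe_set_eq]
            exact Set.ncard_le_ncard hsub (Set.toFinite _)
        _ < t := hb b0
    · have hsub : {b : β | b ∉ Cq} ⊆ {b : β | ¬ r a0 b} := by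
        intro b hbCq hr
        rcases hcov a0 b hr with h | h
        · exact ha0 h
        · exact hbCq h
      calc Nat.card {b : β | b ∉ Cq} ≤ Nat.card {b : β | ¬ r a0 b} := by
            rw [Nat.card_coe_set_eq, Nat.card_coe_set_eq]
            exact Set.ncard_le_ncard hsub (Set.toFinite _)
        _ < t := ha a0
  · set m := min (Fintype.card α)
      (min (Fintype.card β) (Fintype.card α + Fintype.card β - 2 * t)) with hm
    by_cases hm0 : m = 0
    · exact ⟨∅, by simp, by simp, by simp [hm0]⟩
    have hma : m ≤ Fintype.card α := min_le_left _ _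
    have hmb : m ≤ Fintype.card β := le_trans (min_le_right _ _) (min_le_left _ _)
    have hmt : m ≤ Fintype.card α + Fintype.card β - 2 * t :=
      le_trans (min_le_right _ _) (min_le_right _ _)
    have h2t : m + 2 * t ≤ Fintype.card α + Fintype.card β := by omega
    set d := Fintype.card α - m with hd
    have hdm : m + d = Fintype.card α := by omega
    -- neighbor finsets in the augmented graph
    set N : α → Finset β := fun a => Finset.univ.filter (fun b => r a b) with hN
    set N' : α → Finset (β ⊕ Fin d) :=
      fun a => (N a).image Sum.inl ∪ Finset.univ.image Sum.inr with hN'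
    have hNcard : ∀ a, (N a).card + (Finset.univ.filter fun b => ¬ r a b).card
        = Fintype.card β := by
      intro a
      simpa using Finset.card_filter_add_card_filter_not
        (s := (Finset.univ : Finset β)) (fun b => r a b)
    have hN'card : ∀ a, (N' a).card = (N a).card + d := by
      intro a
      rw [hN', Finset.card_union_of_disjoint (by simp [Finset.disjoint_left])]
      rw [Finset.card_image_of_injective _ Sum.inl_injective,
        Finset.card_image_of_injective _ Sum.inr_injective]
      simp
    have hall : ∀ S : Finset α, S.card ≤ (S.biUnion N').card := by
      intro S
      rcases S.eq_empty_or_nonempty with rfl | ⟨a, haS⟩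
      · simp
      by_cases hSt : S.card ≤ t
      · have hsub : N' a ⊆ S.biUnion N' := Finset.subset_biUnion_of_mem N' haS
        have h1 := Finset.card_le_card hsub
        have h2 := hN'card a
        have h3 := hNcard a
        have h4 := hacard a
        omega
      · -- all of univ is covered
        have huniv : (Finset.univ : Finset (β ⊕ Fin d)) ⊆ S.biUnion N' := by
          intro x _
          rcases x with b | i
          · have : ∃ a' ∈ S, r a' b := by
              by_contra hcon
              push_neg at hcon
              have : S ⊆ Finset.univ.filter fun a => ¬ r a b := by
                intro a' ha'; simp [hcon a' ha']
              have := Finset.card_le_card this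
              have := hbcard b
              omega
            obtain ⟨a', ha'S, ha'r⟩ := this
            refine Finset.mem_biUnion.mpr ⟨a', ha'S, ?_⟩
            simp [hN', hN, ha'r]
          · refine Finset.mem_biUnion.mpr ⟨a, haS, ?_⟩
            simp [hN']
        have h1 := Finset.card_le_card huniv
        have h2 : (Finset.univ : Finset (β ⊕ Fin d)).card = Fintype.card β + d := by
          simp [Fintype.card_sum]
        have h3 : S.card ≤ Fintype.card α := Finset.card_le_univ S
        omega
    obtain ⟨f, hfinj, hfmem⟩ :=
      (Finset.all_card_le_biUnion_card_iff_exists_injective N').mp hall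
    -- build the matching
    have hβ : Nonempty β := Fintype.card_pos_iff.mp (by omega)
    set g : α → Option (α × β) := fun a => ((f a).getLeft?).map (fun b => (a, b)) with hg
    have hgmem : ∀ a p, p ∈ g a ↔ ∃ b, f a = Sum.inl b ∧ p = (a, b) := by
      intro a p
      simp only [hg, Option.mem_map]
      constructor
      · rintro ⟨b, hb1, rfl⟩
        exact ⟨b, Sum.getLeft?_eq_some_iff.mp hb1, rfl⟩
      · rintro ⟨b, hb1, rfl⟩
        exact ⟨b, Sum.getLeft?_eq_some_iff.mpr hb1, rfl⟩
    set M : Finset (α × β) := Finset.univ.filterMap g (by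
      intro a a' p h1 h2
      obtain ⟨b, _, hp1⟩ := (hgmem a p).mp h1
      obtain ⟨b', _, hp2⟩ := (hgmem a' p).mp h2
      rw [hp1] at hp2
      exact (Prod.ext_iff.mp hp2).1) with hM
    have hMmem : ∀ p : α × β, p ∈ M ↔ f p.1 = Sum.inl p.2 := by
      intro p
      rw [hM, Finset.mem_filterMap]
      constructor
      · rintro ⟨a, _, hp⟩
        obtain ⟨b, hb1, rfl⟩ := (hgmem a _).mp hp
        exact hb1
      · intro h
        exact ⟨p.1, Finset.mem_univ _, (hgmem p.1 p).mpr ⟨p.2, h, rfl⟩⟩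
    refine ⟨M, ?_, ?_, ?_⟩
    · intro e he
      have h1 := (hMmem e).mp he
      have h2 := hfmem e.1
      rw [h1] at h2
      simp only [hN', Finset.mem_union, Finset.mem_image] at h2
      rcases h2 with ⟨b, hbN, hbe⟩ | ⟨i, _, hie⟩
      · obtain rfl : b = e.2 := Sum.inl_injective hbe
        simpa [hN] using hbN
      · exact absurd hie (by simp)
    · intro e he e' he' hne
      have h1 := (hMmem e).mp he
      have h2 := (hMmem e').mp he'
      constructor
      · intro h
        apply hne
        rw [h] at h1
        exact Prod.ext h (Sum.inl_injective (h1.symm.trans h2))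
      · intro h
        apply hne
        rw [h] at h1
        have := hfinj (h1.trans h2.symm)
        exact Prod.ext this h
    · -- cardinality
      set L : Finset α := Finset.univ.filter (fun a => ∃ b, f a = Sum.inl b) with hL
      set R : Finset α := Finset.univ.filter (fun a => ∃ i, f a = Sum.inr i) with hR
      have hLR : L.card + R.card = Fintype.card α := by
        have key := Finset.card_filter_add_card_filter_not
          (s := (Finset.univ : Finset α)) (fun a => ∃ b, f a = Sum.inl b)
        have hne : (Finset.univ.filter fun a => ¬∃ b, f a = Sum.inl b) = R := by
          rw [hR]
          apply Finset.filter_congr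
          intro a _
          rcases hfa : f a with b | i <;> simp [hfa]
        rw [hne, Finset.card_univ] at key
        rw [hL]
        exact key
      have hRd : R.card ≤ d := by
        have hinj : Set.InjOn f R := Function.Injective.injOn hfinj
        calc R.card = (R.image f).card := (Finset.card_image_of_injOn hinj).symm
          _ ≤ ((Finset.univ : Finset (Fin d)).image Sum.inr).card := by
              apply Finset.card_le_card
              intro y hy
              obtain ⟨a, haR, rfl⟩ := Finset.mem_image.mp hy
              rw [hR] at haR
              obtain ⟨i, hi⟩ := (Finset.mem_filter.mp haR).2
              rw [hi]
              exact Finset.mem_image.mpr ⟨i, Finset.mem_univ _, rfl⟩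
          _ ≤ d := by
              simpa using Finset.card_image_le (s := (Finset.univ : Finset (Fin d)))
                (f := Sum.inr)
      have hLM : L.card ≤ M.card := by
        obtain ⟨b0⟩ := hβ
        set φ : α → α × β := fun a => (a, Sum.elim id (fun _ => b0) (f a)) with hφ
        apply Finset.card_le_card_of_injOn φ
        · intro a haL
          rw [hL] at haL
          obtain ⟨b, hab⟩ := (Finset.mem_filter.mp haL).2
          rw [Finset.mem_coe, hMmem, hφ]
          simp [hab]
        · intro a _ a' _ h
          exact (Prod.ext_iff.mp h).1
      omega
end

section
/- Let x1 ≥ x2 ≥ 1 and let G be the complete bipartite graph K_{m,m} with m = x1 + x2 - 1, with edge partition E(G) = E1 ∪ E2 and Gi = G[Ei]. Then for some i ∈ {1,2}, Gi contains a connected matching of size at least xi. -/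
open SimpleGraph

variable {V : Type*}

lemma hallOrDef (m x : ℕ) (hx : x ≤ m) (col : Fin m → Fin m → Prop) :
    (∃ g h : Fin x → Fin m, Function.Injective g ∧ Function.Injective h ∧
      ∀ k, col (g k) (h k)) ∨
    (∃ S T : Finset (Fin m), m - x + 1 ≤ S.card ∧ m - x + 1 ≤ T.card ∧
      ∀ a ∈ S, ∀ b ∈ T, ¬ col a b) := by
  classical
  set N : Fin m → Finset (Fin m) := fun a => Finset.univ.filter (fun b => col a b) with hN
  by_cases hc : ∀ S : Finset (Fin m), S.card ≤ (S.biUnion N).card + (m - x)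
  · left
    set t : Fin m → Finset (Fin m ⊕ Fin (m - x)) :=
      fun a => (N a).image Sum.inl ∪ Finset.univ.image Sum.inr with ht
    have hall : ∀ S : Finset (Fin m), S.card ≤ (S.biUnion t).card := by
      intro S
      rcases S.eq_empty_or_nonempty with rfl | ⟨a0, ha0⟩
      · simp
      · have hsub : ((S.biUnion N).image Sum.inl ∪ Finset.univ.image
            (Sum.inr : Fin (m - x) → Fin m ⊕ Fin (m - x))) ⊆ S.biUnion t := by
          apply Finset.union_subset
          · intro v hv
            simp only [Finset.mem_image, Finset.mem_biUnion] at hv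
            obtain ⟨b, ⟨a1, ha1, hb⟩, rfl⟩ := hv
            exact Finset.mem_biUnion.2 ⟨a1, ha1,
              Finset.mem_union_left _ (Finset.mem_image_of_mem _ hb)⟩
          · intro v hv
            exact Finset.mem_biUnion.2 ⟨a0, ha0, Finset.mem_union_right _ hv⟩
        have hdisj : Disjoint ((S.biUnion N).image Sum.inl)
            (Finset.univ.image (Sum.inr : Fin (m - x) → Fin m ⊕ Fin (m - x))) := by
          simp only [Finset.disjoint_left, Finset.mem_image]
          rintro v ⟨b, _, rfl⟩ ⟨b', _, h⟩
          exact Sum.inl_ne_inr h.symm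
        have hcard := Finset.card_le_card hsub
        rw [Finset.card_union_of_disjoint hdisj,
          Finset.card_image_of_injective _ Sum.inl_injective,
          Finset.card_image_of_injective _ Sum.inr_injective,
          Finset.card_univ, Fintype.card_fin] at hcard
        have := hc S
        omega
    obtain ⟨f, hfinj, hmem⟩ := (Finset.all_card_le_biUnion_card_iff_exists_injective t).mp hall
    set A : Finset (Fin m) := Finset.univ.filter (fun a => (f a).isLeft) with hA
    have hcardA : x ≤ A.card := by
      have hsplit := Finset.card_filter_add_card_filter_not
        (s := (Finset.univ : Finset (Fin m))) (p := fun a => (f a).isLeft)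
      have hAc : (Finset.univ.filter (fun a => ¬ (f a).isLeft)).card ≤ m - x := by
        have hle : (Finset.univ.filter (fun a => ¬ (f a).isLeft)).card ≤
            (Finset.univ.image (some : Fin (m - x) → Option (Fin (m - x)))).card := by
          apply Finset.card_le_card_of_injOn (fun a => (f a).getRight?)
          · intro a ha
            simp only [Finset.mem_coe, Finset.mem_filter, Finset.mem_univ, true_and] at ha
            rcases hfa : f a with b | b
            · rw [hfa] at ha; simp at ha
            · simpa [hfa] using Finset.mem_image_of_mem some (Finset.mem_univ b)
          · intro a ha a' ha' hgr
            simp only [Finset.mem_coe, Finset.mem_filter, Finset.mem_univ, true_and] at ha ha'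
            rcases hfa : f a with b | b
            · rw [hfa] at ha; simp at ha
            rcases hfa' : f a' with b' | b'
            · rw [hfa'] at ha'; simp at ha'
            simp only at hgr
            rw [hfa, hfa'] at hgr
            simp only [Sum.getRight?, Option.some.injEq] at hgr
            exact hfinj (by rw [hfa, hfa', hgr])
        rwa [Finset.card_image_of_injective _ (Option.some_injective _),
          Finset.card_univ, Fintype.card_fin] at hle
      rw [Finset.card_univ, Fintype.card_fin] at hsplit
      rw [← hA] at hsplit
      omega
    have hleft : ∀ a ∈ A, ∃ b, f a = Sum.inl b ∧ b ∈ N a := by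
      intro a ha
      rw [hA, Finset.mem_filter] at ha
      rcases hfa : f a with b | b
      · refine ⟨b, rfl, ?_⟩
        have hmem' := hmem a
        rw [ht] at hmem'
        simp only [Finset.mem_union, Finset.mem_image] at hmem'
        rcases hmem' with ⟨b', hb', he⟩ | ⟨b', _, he⟩
        · rw [hfa] at he
          obtain rfl : b' = b := by simpa using he
          exact hb'
        · rw [hfa] at he; simp at he
      · rw [hfa] at ha; simp at ha
    set g : Fin x → Fin m := fun k => A.orderEmbOfCardLe hcardA k with hg
    have hgmem : ∀ k, g k ∈ A := fun k => A.orderEmbOfCardLe_mem hcardA k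
    set h : Fin x → Fin m := fun k => (hleft (g k) (hgmem k)).choose with hh
    have hhspec : ∀ k, f (g k) = Sum.inl (h k) ∧ h k ∈ N (g k) :=
      fun k => (hleft (g k) (hgmem k)).choose_spec
    have hginj : Function.Injective g := (A.orderEmbOfCardLe hcardA).injective
    refine ⟨g, h, hginj, ?_, ?_⟩
    · intro k k' hkk
      have : f (g k) = f (g k') := by rw [(hhspec k).1, (hhspec k').1, hkk]
      exact hginj (hfinj this)
    · intro k
      have := (hhspec k).2
      rw [hN] at this
      simpa using this
  · right
    push_neg at hc
    obtain ⟨S, hS⟩ := hc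
    refine ⟨S, Finset.univ \ S.biUnion N, ?_, ?_, ?_⟩
    · have := Finset.card_le_univ S
      simp only [Fintype.card_fin] at this
      omega
    · rw [Finset.card_sdiff_of_subset (Finset.subset_univ _), Finset.card_univ, Fintype.card_fin]
      have h1 := Finset.card_le_univ S
      simp only [Fintype.card_fin] at h1
      omega
    · intro a ha b hb
      rw [Finset.mem_sdiff] at hb
      intro hcol
      exact hb.2 (Finset.mem_biUnion.2 ⟨a, ha, by simp [hN, hcol]⟩)

section Aux

variable {m : ℕ} {G : SimpleGraph (Fin m ⊕ Fin m)} {c : Sym2 (Fin m ⊕ Fin m) → Fin 2}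

lemma aux_adj (hG : G = SimpleGraph.fromRel
      (fun u v => u.isLeft = true ∧ v.isLeft = false))
    {i : Fin 2} {a b : Fin m} (h : c s(Sum.inl a, Sum.inr b) = i) :
    (colorSub G c i).Adj (Sum.inl a) (Sum.inr b) := by
  subst hG
  unfold colorSub
  rw [SimpleGraph.fromRel_adj]
  refine ⟨by simp, Or.inl ⟨?_, h⟩⟩
  rw [SimpleGraph.fromRel_adj]
  exact ⟨by simp, Or.inl ⟨rfl, rfl⟩⟩

lemma buildM {x : ℕ} {i : Fin 2} (p q : Fin x → (Fin m ⊕ Fin m))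
    (hp : Function.Injective p) (hq : Function.Injective q)
    (hpq : ∀ k k', p k ≠ q k')
    (hadj : ∀ k, (colorSub G c i).Adj (p k) (q k))
    (hreach : ∀ k k', (colorSub G c i).Reachable (p k) (p k')) :
    ∃ M, ConnMatching (colorSub G c i) M ∧ x ≤ M.card := by
  classical
  refine ⟨Finset.univ.image (fun k => (p k, q k)), ⟨⟨?_, ?_⟩, ?_⟩, ?_⟩
  · intro e he
    simp only [Finset.mem_image, Finset.mem_univ, true_and] at he
    obtain ⟨k, rfl⟩ := he
    exact hadj k
  · intro e he f hf hef
    simp only [Finset.mem_image, Finset.mem_univ, true_and] at he hf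
    obtain ⟨k, rfl⟩ := he
    obtain ⟨k', rfl⟩ := hf
    have hkk : k ≠ k' := fun h => hef (by rw [h])
    exact ⟨fun h => hkk (hp h), hpq k k', fun h => hpq k' k h.symm, fun h => hkk (hq h)⟩
  · intro e he f hf
    simp only [Finset.mem_image, Finset.mem_univ, true_and] at he hf
    obtain ⟨k, rfl⟩ := he
    obtain ⟨k', rfl⟩ := hf
    exact hreach k k'
  · have hinj : Function.Injective (fun k : Fin x => (p k, q k)) :=
      fun a b h => hp (congrArg Prod.fst h)
    have hcard : (Finset.univ.image (fun k : Fin x => (p k, q k))).card = x := by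
      rw [Finset.card_image_of_injective _ hinj, Finset.card_univ, Fintype.card_fin]
    omega

lemma completeBip (hG : G = SimpleGraph.fromRel
      (fun u v => u.isLeft = true ∧ v.isLeft = false))
    {i : Fin 2} {x : ℕ} (hx1 : 1 ≤ x)
    (A B : Finset (Fin m)) (hA : x ≤ A.card) (hB : x ≤ B.card)
    (hcol : ∀ a ∈ A, ∀ b ∈ B, c s(Sum.inl a, Sum.inr b) = i) :
    ∃ M, ConnMatching (colorSub G c i) M ∧ x ≤ M.card := by
  have hadj2 : ∀ k l : Fin x, (colorSub G c i).Adj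
      (Sum.inl (A.orderEmbOfCardLe hA k)) (Sum.inr (B.orderEmbOfCardLe hB l)) :=
    fun k l => aux_adj hG (hcol _ (A.orderEmbOfCardLe_mem hA k) _ (B.orderEmbOfCardLe_mem hB l))
  refine buildM (fun k => Sum.inl (A.orderEmbOfCardLe hA k))
    (fun k => Sum.inr (B.orderEmbOfCardLe hB k)) ?_ ?_ ?_ ?_ ?_
  · exact fun k k' h => (A.orderEmbOfCardLe hA).injective (Sum.inl_injective h)
  · exact fun k k' h => (B.orderEmbOfCardLe hB).injective (Sum.inr_injective h)
  · intro k k'; simp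
  · exact fun k => hadj2 k k
  · intro k k'
    exact ((hadj2 k ⟨0, hx1⟩).reachable).trans ((hadj2 k' ⟨0, hx1⟩).reachable.symm)

end Aux

/-- Bipartite case of the 2-color theorem: in every 2-edge-coloring of
`K_{m,m}` with `m = x₁ + x₂ - 1` (`x₁ ≥ x₂ ≥ 1`), some color `i` contains a
connected matching of size at least `xᵢ`. -/
theorem stmt16 (x : Fin 2 → ℕ) (hx : x 1 ≤ x 0) (hx1 : 1 ≤ x 1)
    (m : ℕ) (hm : m = x 0 + x 1 - 1)
    (G : SimpleGraph (Fin m ⊕ Fin m))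
    (hG : G = SimpleGraph.fromRel
      (fun u v => u.isLeft = true ∧ v.isLeft = false))
    (c : Sym2 (Fin m ⊕ Fin m) → Fin 2) :
    ∃ i : Fin 2, ∃ M, ConnMatching (colorSub G c i) M ∧ x i ≤ M.card := by
  classical
  have hx0m : x 0 ≤ m := by omega
  have hx1m : x 1 ≤ m := by omega
  have hfin2a : ∀ j : Fin 2, j ≠ 0 → j = 1 := by decide
  have hfin2b : ∀ j : Fin 2, j ≠ 1 → j = 0 := by decide
  have hx01 : 1 ≤ x 0 := by omega
  by_cases hPL1 : ∀ z z' : Fin m, (colorSub G c 1).Reachable (Sum.inl z) (Sum.inl z')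
  · rcases hallOrDef m (x 1) hx1m (fun a b => c s(Sum.inl a, Sum.inr b) = 1) with
      ⟨g, h, hg, hh, hcol⟩ | ⟨S, T, hS, hT, hST⟩
    · refine ⟨1, ?_⟩
      refine buildM (fun k => Sum.inl (g k)) (fun k => Sum.inr (h k)) ?_ ?_ ?_ ?_ ?_
      · exact fun k k' hk => hg (Sum.inl_injective hk)
      · exact fun k k' hk => hh (Sum.inr_injective hk)
      · intro k k'; simp
      · exact fun k => aux_adj hG (hcol k)
      · exact fun k k' => hPL1 (g k) (g k')
    · refine ⟨0, ?_⟩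
      refine completeBip hG hx01 S T (by omega) (by omega) ?_
      intro a ha b hb
      exact hfin2b _ (hST a ha b hb)
  by_cases hPL0 : ∀ z z' : Fin m, (colorSub G c 0).Reachable (Sum.inl z) (Sum.inl z')
  · rcases hallOrDef m (x 0) hx0m (fun a b => c s(Sum.inl a, Sum.inr b) = 0) with
      ⟨g, h, hg, hh, hcol⟩ | ⟨S, T, hS, hT, hST⟩
    · refine ⟨0, ?_⟩
      refine buildM (fun k => Sum.inl (g k)) (fun k => Sum.inr (h k)) ?_ ?_ ?_ ?_ ?_
      · exact fun k k' hk => hg (Sum.inl_injective hk)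
      · exact fun k k' hk => hh (Sum.inr_injective hk)
      · intro k k'; simp
      · exact fun k => aux_adj hG (hcol k)
      · exact fun k k' => hPL0 (g k) (g k')
    · refine ⟨1, ?_⟩
      refine completeBip hG hx1 S T (by omega) (by omega) ?_
      intro a ha b hb
      exact hfin2a _ (hST a ha b hb)
  by_cases hPR1 : ∀ z z' : Fin m, (colorSub G c 1).Reachable (Sum.inr z) (Sum.inr z')
  · rcases hallOrDef m (x 1) hx1m (fun b a => c s(Sum.inl a, Sum.inr b) = 1) with
      ⟨g, h, hg, hh, hcol⟩ | ⟨S, T, hS, hT, hST⟩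
    · refine ⟨1, ?_⟩
      refine buildM (fun k => Sum.inr (g k)) (fun k => Sum.inl (h k)) ?_ ?_ ?_ ?_ ?_
      · exact fun k k' hk => hg (Sum.inr_injective hk)
      · exact fun k k' hk => hh (Sum.inl_injective hk)
      · intro k k'; simp
      · exact fun k => (aux_adj hG (hcol k)).symm
      · exact fun k k' => hPR1 (g k) (g k')
    · refine ⟨0, ?_⟩
      refine completeBip hG hx01 T S (by omega) (by omega) ?_
      intro a ha b hb
      exact hfin2b _ (hST b hb a ha)
  by_cases hPR0 : ∀ z z' : Fin m, (colorSub G c 0).Reachable (Sum.inr z) (Sum.inr z')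
  · rcases hallOrDef m (x 0) hx0m (fun b a => c s(Sum.inl a, Sum.inr b) = 0) with
      ⟨g, h, hg, hh, hcol⟩ | ⟨S, T, hS, hT, hST⟩
    · refine ⟨0, ?_⟩
      refine buildM (fun k => Sum.inr (g k)) (fun k => Sum.inl (h k)) ?_ ?_ ?_ ?_ ?_
      · exact fun k k' hk => hg (Sum.inr_injective hk)
      · exact fun k k' hk => hh (Sum.inl_injective hk)
      · intro k k'; simp
      · exact fun k => (aux_adj hG (hcol k)).symm
      · exact fun k k' => hPR0 (g k) (g k')
    · refine ⟨1, ?_⟩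
      refine completeBip hG hx1 T S (by omega) (by omega) ?_
      intro a ha b hb
      exact hfin2a _ (hST b hb a ha)
  -- structural case
  push_neg at hPL1 hPR0
  obtain ⟨a, a', hna⟩ := hPL1
  obtain ⟨r0, r0', hnr⟩ := hPR0
  have ha' : ¬ (colorSub G c 1).Reachable (Sum.inl a') (Sum.inl a) := fun h => hna h.symm
  have hAD : ∀ z, (colorSub G c 1).Reachable (Sum.inl z) (Sum.inl a) →
      ∀ d, ¬ (colorSub G c 1).Reachable (Sum.inr d) (Sum.inl a) →
      c s(Sum.inl z, Sum.inr d) = 0 := by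
    intro z hz d hd
    by_contra hne
    exact hd (((aux_adj hG (hfin2a _ hne)).symm.reachable).trans hz)
  have hBC : ∀ z, ¬ (colorSub G c 1).Reachable (Sum.inl z) (Sum.inl a) →
      ∀ b, (colorSub G c 1).Reachable (Sum.inr b) (Sum.inl a) →
      c s(Sum.inl z, Sum.inr b) = 0 := by
    intro z hz b hb
    by_contra hne
    exact hz (((aux_adj hG (hfin2a _ hne)).reachable).trans hb)
  have stepC : ∀ cc, (colorSub G c 1).Reachable (Sum.inr cc) (Sum.inl a) →
      (colorSub G c 0).Reachable (Sum.inr cc) (Sum.inl a') :=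
    fun cc h => (aux_adj hG (hBC a' ha' cc h)).symm.reachable
  have stepD : ∀ d, ¬ (colorSub G c 1).Reachable (Sum.inr d) (Sum.inl a) →
      (colorSub G c 0).Reachable (Sum.inr d) (Sum.inl a) :=
    fun d h => (aux_adj hG (hAD a (SimpleGraph.Reachable.refl _) d h)).symm.reachable
  have hAC : ∀ z, (colorSub G c 1).Reachable (Sum.inl z) (Sum.inl a) →
      ∀ b, (colorSub G c 1).Reachable (Sum.inr b) (Sum.inl a) →
      c s(Sum.inl z, Sum.inr b) = 1 := by
    intro z hz b hb
    by_contra hne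
    have adj0 := aux_adj (i := 0) hG (hfin2b _ hne)
    apply hnr
    have cross : ∀ r r', (colorSub G c 1).Reachable (Sum.inr r) (Sum.inl a) →
        ¬ (colorSub G c 1).Reachable (Sum.inr r') (Sum.inl a) →
        (colorSub G c 0).Reachable (Sum.inr r) (Sum.inr r') := by
      intro r r' hr hr'
      refine (stepC r hr).trans ?_
      refine ((aux_adj hG (hBC a' ha' b hb)).reachable).trans ?_
      refine (adj0.reachable.symm).trans ?_
      exact (aux_adj hG (hAD z hz r' hr')).reachable
    by_cases h1r : (colorSub G c 1).Reachable (Sum.inr r0) (Sum.inl a) <;>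
      by_cases h1r' : (colorSub G c 1).Reachable (Sum.inr r0') (Sum.inl a)
    · exact (stepC r0 h1r).trans (stepC r0' h1r').symm
    · exact cross r0 r0' h1r h1r'
    · exact (cross r0' r0 h1r' h1r).symm
    · exact (stepD r0 h1r).trans (stepD r0' h1r').symm
  have hBD : ∀ z, ¬ (colorSub G c 1).Reachable (Sum.inl z) (Sum.inl a) →
      ∀ d, ¬ (colorSub G c 1).Reachable (Sum.inr d) (Sum.inl a) →
      c s(Sum.inl z, Sum.inr d) = 1 := by
    intro z hz d hd
    by_contra hne
    have adj0 := aux_adj (i := 0) hG (hfin2b _ hne)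
    apply hnr
    have cross : ∀ r r', (colorSub G c 1).Reachable (Sum.inr r) (Sum.inl a) →
        ¬ (colorSub G c 1).Reachable (Sum.inr r') (Sum.inl a) →
        (colorSub G c 0).Reachable (Sum.inr r) (Sum.inr r') := by
      intro r r' hr hr'
      refine ((aux_adj hG (hBC z hz r hr)).symm.reachable).trans ?_
      refine (adj0.reachable).trans ?_
      refine (stepD d hd).trans ?_
      exact (stepD r' hr').symm
    by_cases h1r : (colorSub G c 1).Reachable (Sum.inr r0) (Sum.inl a) <;>
      by_cases h1r' : (colorSub G c 1).Reachable (Sum.inr r0') (Sum.inl a)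
    · exact (stepC r0 h1r).trans (stepC r0' h1r').symm
    · exact cross r0 r0' h1r h1r'
    · exact (cross r0' r0 h1r' h1r).symm
    · exact (stepD r0 h1r).trans (stepD r0' h1r').symm
  have hABm : (Finset.univ.filter (fun z : Fin m =>
        (colorSub G c 1).Reachable (Sum.inl z) (Sum.inl a))).card +
      (Finset.univ.filter (fun z : Fin m =>
        ¬ (colorSub G c 1).Reachable (Sum.inl z) (Sum.inl a))).card = m := by
    rw [Finset.card_filter_add_card_filter_not, Finset.card_univ, Fintype.card_fin]
  have hCDm : (Finset.univ.filter (fun z : Fin m =>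
        (colorSub G c 1).Reachable (Sum.inr z) (Sum.inl a))).card +
      (Finset.univ.filter (fun z : Fin m =>
        ¬ (colorSub G c 1).Reachable (Sum.inr z) (Sum.inl a))).card = m := by
    rw [Finset.card_filter_add_card_filter_not, Finset.card_univ, Fintype.card_fin]
  rcases (by omega :
      (x 0 ≤ (Finset.univ.filter (fun z : Fin m =>
        (colorSub G c 1).Reachable (Sum.inl z) (Sum.inl a))).card ∧
       x 0 ≤ (Finset.univ.filter (fun z : Fin m =>
        ¬ (colorSub G c 1).Reachable (Sum.inr z) (Sum.inl a))).card) ∨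
      (x 0 ≤ (Finset.univ.filter (fun z : Fin m =>
        ¬ (colorSub G c 1).Reachable (Sum.inl z) (Sum.inl a))).card ∧
       x 0 ≤ (Finset.univ.filter (fun z : Fin m =>
        (colorSub G c 1).Reachable (Sum.inr z) (Sum.inl a))).card) ∨
      (x 1 ≤ (Finset.univ.filter (fun z : Fin m =>
        (colorSub G c 1).Reachable (Sum.inl z) (Sum.inl a))).card ∧
       x 1 ≤ (Finset.univ.filter (fun z : Fin m =>
        (colorSub G c 1).Reachable (Sum.inr z) (Sum.inl a))).card) ∨
      (x 1 ≤ (Finset.univ.filter (fun z : Fin m =>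
        ¬ (colorSub G c 1).Reachable (Sum.inl z) (Sum.inl a))).card ∧
       x 1 ≤ (Finset.univ.filter (fun z : Fin m =>
        ¬ (colorSub G c 1).Reachable (Sum.inr z) (Sum.inl a))).card)) with
    ⟨h1, h2⟩ | ⟨h1, h2⟩ | ⟨h1, h2⟩ | ⟨h1, h2⟩
  · refine ⟨0, completeBip hG hx01 _ _ h1 h2 ?_⟩
    intro z hz d hd
    rw [Finset.mem_filter] at hz hd
    exact hAD z hz.2 d hd.2
  · refine ⟨0, completeBip hG hx01 _ _ h1 h2 ?_⟩
    intro z hz b hb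
    rw [Finset.mem_filter] at hz hb
    exact hBC z hz.2 b hb.2
  · refine ⟨1, completeBip hG hx1 _ _ h1 h2 ?_⟩
    intro z hz b hb
    rw [Finset.mem_filter] at hz hb
    exact hAC z hz.2 b hb.2
  · refine ⟨1, completeBip hG hx1 _ _ h1 h2 ?_⟩
    intro z hz d hd
    rw [Finset.mem_filter] at hz hd
    exact hBD z hz.2 d hd.2
end

section
/- Let G be a complete multipartite graph with parts V1,...,Vs each of which is a proper subset of V(G), with N - n_i ≥ 1 for all i, and let v be an isolated vertex of G1 = G[E1] in an edge partition E(G) = E1 ∪ E2. Then the component of G2 = G[E2] containing v contains every edge of G2 whose both endpoints lie outside the part containing v, and in fact all edges of G2; hence α'_*(G2) = α'(G2). -/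
open SimpleGraph

variable {V : Type*}

/-- If `G` is complete multipartite with every part a proper subset of the
vertex set, and `v` is an isolated vertex of `G₁` in a 2-edge-coloring, then
the component of `G₂` containing `v` contains every edge of `G₂` both of
whose endpoints are outside the part of `v`, and in fact all edges of `G₂`;
hence `α'_*(G₂) = α'(G₂)`. -/
theorem stmt19 {V : Type*} [Fintype V] (s : ℕ) (hs : 2 ≤ s)
    (p : V → Fin s) (hp : Function.Surjective p)
    (hproper : ∀ i : Fin s, ∃ u : V, p u ≠ i)
    (G : SimpleGraph V) (hG : G = SimpleGraph.fromRel (fun u v => p u ≠ p v))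
    (c : Sym2 V → Fin 2)
    (G1 G2 : SimpleGraph V)
    (hG1 : G1 = colorSub G c 0) (hG2 : G2 = colorSub G c 1)
    (v : V) (hv : ∀ u, ¬ G1.Adj v u) :
    (∀ u w, G2.Adj u w → p u ≠ p v → p w ≠ p v → G2.Reachable v u) ∧
    (∀ u w, G2.Adj u w → G2.Reachable v u) ∧
    (∀ M, IsMatchingSet G2 M →
      ∃ M', ConnMatching G2 M' ∧ M'.card = M.card) := by
  subst hG hG1 hG2
  -- v is adjacent in G2 to every vertex outside its part
  have hadj : ∀ u, p u ≠ p v → (colorSub (SimpleGraph.fromRel (fun u v => p u ≠ p v)) c 1).Adj v u := by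
    intro u hu
    have hne : v ≠ u := fun h => hu (by rw [h])
    have hGadj : (SimpleGraph.fromRel (fun u v => p u ≠ p v)).Adj v u := by
      rw [SimpleGraph.fromRel_adj]
      exact ⟨hne, Or.inr hu⟩
    have h01 : c s(v,u) = 0 ∨ c s(v,u) = 1 := by omega
    have hc : c s(v,u) = 1 := by
      rcases h01 with h0 | h1
      · exact absurd (by
          show (colorSub _ c 0).Adj v u
          rw [colorSub, SimpleGraph.fromRel_adj]
          exact ⟨hne, Or.inl ⟨hGadj, h0⟩⟩) (hv u)
      · exact h1
    rw [colorSub, SimpleGraph.fromRel_adj]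
    exact ⟨hne, Or.inl ⟨hGadj, hc⟩⟩
  -- edges of G2 join distinct parts
  have hparts : ∀ u w, (colorSub (SimpleGraph.fromRel (fun u v => p u ≠ p v)) c 1).Adj u w → p u ≠ p w := by
    intro u w huw
    rw [colorSub, SimpleGraph.fromRel_adj] at huw
    rcases huw with ⟨hne, h | h⟩
    · rw [SimpleGraph.fromRel_adj] at h
      rcases h.1.2 with h' | h'
      · exact h'
      · exact h'.symm
    · rw [SimpleGraph.fromRel_adj] at h
      rcases h.1.2 with h' | h'
      · exact h'.symm
      · exact h'
  have hreach : ∀ u w, (colorSub (SimpleGraph.fromRel (fun u v => p u ≠ p v)) c 1).Adj u w →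
      (colorSub (SimpleGraph.fromRel (fun u v => p u ≠ p v)) c 1).Reachable v u := by
    intro u w huw
    by_cases hu : p u = p v
    · have hw : p w ≠ p v := fun h => hparts u w huw (hu.trans h.symm)
      exact ((hadj w hw).reachable).trans huw.symm.reachable
    · exact (hadj u hu).reachable
  refine ⟨fun u w huw hu _ => (hadj u hu).reachable, hreach, ?_⟩
  intro M hM
  refine ⟨M, ⟨hM, ?_⟩, rfl⟩
  intro e he f hf
  have h1 := hreach e.1 e.2 (hM.1 e he)
  have h2 := hreach f.1 f.2 (hM.1 f hf)
  exact h1.symm.trans h2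
end
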